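/- For every n ≥ 3, the alternating group A_{n+2} on {1,...,n+2} is generated by the subgroup consisting of all even permutations fixing both n+1 and n+2 (a copy of A_n) together with the single double transposition (n-1, n+1)(n, n+2). -/

import Mathlib

/-!
Let `H` be generated by the even permutations fixing `p` and `q` together with `t = (a p)(b q)`,
and let `x` be a fifth point. Conjugating the 3-cycle `swap a b * swap a y` by `t` gives
`swap p q * swap p y` for every `y` outside `{a, b, p, q}`; conjugating the one for `y = x` by the
3-cycles `swap b a * swap b x` and `swap a b * swap a x`, which fix `p` and `q`, gives it for
`y = a` and `y = b`. So `H` contains every `swap p q * swap p y`, and these 3-cycles generate the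
alternating group.
-/

open Subgroup

namespace Equiv.Perm

variable {α : Type*} [DecidableEq α]

theorem swap_mul_swap_mem_alternatingGroup [Fintype α] {a b c d : α} (hab : a ≠ b) (hcd : c ≠ d) :
    swap a b * swap c d ∈ alternatingGroup α :=
  mul_mem_alternatingGroup_of_isSwap ⟨a, b, hab, rfl⟩ ⟨c, d, hcd, rfl⟩

theorem mul_swap_mul_swap_mul_inv (f : Perm α) (x y z : α) :
    f * (swap x y * swap x z) * f⁻¹ = swap (f x) (f y) * swap (f x) (f z) := by
  rw [swap_apply_apply, swap_apply_apply]
  group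

/-- `(s * swap p u) * (s * swap p v)⁻¹ * (s * swap p u) = s * swap u v` and
`(s * σ)⁻¹ * (s * τ) = σ * τ`, so `H` contains every product of two transpositions. -/
theorem alternatingGroup_le_of_mul_swap_mem [Fintype α] {H : Subgroup (Perm α)} (s : Perm α)
    (p : α) (h : ∀ y, y ≠ p → s * swap p y ∈ H) : alternatingGroup α ≤ H := by
  have mul_swap_mem : ∀ u v, u ≠ v → s * swap u v ∈ H := by
    intro u v huv
    by_cases hu : u = p
    · subst hu; exact h v huv.symm
    by_cases hv : v = p
    · subst hv; rw [swap_comm]; exact h u hu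
    have key : s * swap p u * (s * swap p v)⁻¹ * (s * swap p u) = s * swap u v := by
      rw [mul_inv_rev, swap_inv, swap_comm p v, ← swap_mul_swap_mul_swap hv huv.symm]
      group
    exact key ▸ mul_mem (mul_mem (h u hu) (inv_mem (h v hv))) (h u hu)
  rw [← closure_three_cycles_eq_alternating, closure_le]
  intro g hg
  obtain ⟨a, ha⟩ : g.support.Nonempty := Finset.card_pos.1 (by simp [hg.card_support])
  have hga : a ≠ g a := (mem_support.1 ha).symm
  rw [hg.eq_swap_mul_swap_iff_mem_support.2 ha]
  simpa [mul_assoc] using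
    mul_mem (inv_mem (mul_swap_mem _ _ hga)) (mul_swap_mem _ _ (g.injective.ne hga))

theorem swap_mul_swap_apply_of_notMem {u v w r : α} (h : r ∉ [u, v, w]) :
    (swap u v * swap u w) r = r := by
  simp only [List.mem_cons, List.not_mem_nil, or_false, not_or] at h
  rw [mul_apply, swap_apply_of_ne_of_ne h.1 h.2.2, swap_apply_of_ne_of_ne h.1 h.2.1]

theorem alternatingGroup_le_of_swap_mul_swap_mem [Fintype α] {H : Subgroup (Perm α)}
    {a b p q x : α} (hnodup : [a, b, p, q, x].Nodup)
    (hfix : ∀ σ ∈ alternatingGroup α, σ p = p → σ q = q → σ ∈ H)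
    (ht : swap a p * swap b q ∈ H) : alternatingGroup α ≤ H := by
  simp only [List.nodup_cons, List.mem_cons, List.not_mem_nil, List.nodup_nil, or_false, not_or,
    not_false_eq_true, and_true] at hnodup
  obtain ⟨⟨hab, hap, haq, hax⟩, ⟨hbp, hbq, hbx⟩, ⟨hpq, hpx⟩, hqx⟩ := hnodup
  have three_cycle_mem : ∀ u v w, u ≠ v → u ≠ w → p ∉ [u, v, w] → q ∉ [u, v, w] →
      swap u v * swap u w ∈ H := fun u v w huv huw hp hq ↦
    hfix _ (swap_mul_swap_mem_alternatingGroup huv huw)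
      (swap_mul_swap_apply_of_notMem hp) (swap_mul_swap_apply_of_notMem hq)
  have generic : ∀ y, y ∉ [a, b, p, q] → swap p q * swap p y ∈ H := by
    intro y hy
    have hty : (swap a p * swap b q) y = y := by
      rw [mul_apply, swap_apply_of_ne_of_ne, swap_apply_of_ne_of_ne] <;> grind
    have := mul_mem (mul_mem ht (three_cycle_mem a b y hab (by grind) (by grind) (by grind)))
      (inv_mem ht)
    rwa [mul_swap_mul_swap_mul_inv, hty, mul_apply, mul_apply, swap_apply_of_ne_of_ne hab haq,
      swap_apply_left, swap_apply_left,
      swap_apply_of_ne_of_ne (Ne.symm haq) (Ne.symm hpq)] at this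
  have conj_mem : ∀ u v w, u ≠ v → u ≠ w → p ∉ [u, v, w] → q ∉ [u, v, w] →
      swap p q * swap p w ∈ H → swap p q * swap p v ∈ H := by
    intro u v w huv huw hp hq hw
    have := mul_mem (mul_mem (three_cycle_mem u v w huv huw hp hq) hw)
      (inv_mem (three_cycle_mem u v w huv huw hp hq))
    rwa [mul_swap_mul_swap_mul_inv, swap_mul_swap_apply_of_notMem hp,
      swap_mul_swap_apply_of_notMem hq, mul_apply, swap_apply_right, swap_apply_left] at this
  have hx : swap p q * swap p x ∈ H := generic x (by grind)
  refine alternatingGroup_le_of_mul_swap_mem (swap p q) p fun y hyp ↦ ?_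
  by_cases hyq : y = q
  · rw [hyq, swap_mul_self]; exact one_mem H
  by_cases hya : y = a
  · exact hya ▸ conj_mem b a x (Ne.symm hab) hbx (by grind) (by grind) hx
  by_cases hyb : y = b
  · exact hyb ▸ conj_mem a b x hab hax (by grind) (by grind) hx
  exact generic y (by grind)

theorem closure_fixing_union_swap_mul_swap_eq_alternatingGroup [Fintype α] {a b p q x : α}
    (hnodup : [a, b, p, q, x].Nodup) :
    closure ({σ | σ ∈ alternatingGroup α ∧ σ p = p ∧ σ q = q} ∪ {swap a p * swap b q}) =
      alternatingGroup α := by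
  refine le_antisymm (closure_le _ |>.2 ?_) (alternatingGroup_le_of_swap_mul_swap_mem hnodup
    (fun σ hσ hp hq ↦ subset_closure (.inl ⟨hσ, hp, hq⟩)) (subset_closure (.inr rfl)))
  rintro σ (⟨hσ, -, -⟩ | rfl)
  · exact hσ
  · exact swap_mul_swap_mem_alternatingGroup (by grind) (by grind)

end Equiv.Perm

theorem stmt15 (n : ℕ) (hn : 3 ≤ n) :
    -- letters 1,…,n+2 are represented 0-based by `Fin (n+2)`;
    -- the letters n+1 and n+2 are the indices `n` and `n+1`, and the double
    -- transposition (n-1, n+1)(n, n+2) swaps indices n-2 ↔ n and n-1 ↔ n+1.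
    let a : Fin (n + 2) := ⟨n - 2, by omega⟩
    let b : Fin (n + 2) := ⟨n - 1, by omega⟩
    let p : Fin (n + 2) := ⟨n, by omega⟩
    let q : Fin (n + 2) := ⟨n + 1, by omega⟩
    let t : Equiv.Perm (Fin (n + 2)) := Equiv.swap a p * Equiv.swap b q
    Subgroup.closure
        ({σ | σ ∈ alternatingGroup (Fin (n + 2)) ∧ σ p = p ∧ σ q = q} ∪ {t}) =
      alternatingGroup (Fin (n + 2)) :=
  Equiv.Perm.closure_fixing_union_swap_mul_swap_eq_alternatingGroup (x := ⟨0, by omega⟩)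
    (by simp [Fin.ext_iff]; omega)
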